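/- For every g in the general linear group GL(3, 𝔽₂) of invertible 3×3 matrices over the field with two elements, the number of 1-dimensional linear subspaces W of 𝔽₂³ with g·W = W equals the number of 2-dimensional linear subspaces U of 𝔽₂³ with g·U = U. -/

import Mathlib

/-!
Over `𝔽₂` the only nonzero scalar is `1`, so a line is `f`-invariant exactly when its nonzero
vector is fixed: invariant lines correspond to the nonzero vectors of `ker (f - 1)`. Taking
annihilators turns `f`-invariant hyperplanes of `V` into invariant lines of the dual space for the
transpose `f.dualMap`, hence into nonzero vectors of `ker (f.dualMap - 1)`. The two kernels have the
same dimension because `f - 1` and its transpose have the same rank, so they are isomorphic and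
have the same number of nonzero vectors.
-/

/-- The action of `GL(3, 𝔽₂)` on linear subspaces of `𝔽₂³` by taking images. -/
def glAct (g : GL (Fin 3) (ZMod 2)) (W : Submodule (ZMod 2) (Fin 3 → ZMod 2)) :
    Submodule (ZMod 2) (Fin 3 → ZMod 2) :=
  W.map (Matrix.toLin' (g : Matrix (Fin 3) (Fin 3) (ZMod 2)))

open Module Submodule

theorem Submodule.dualAnnihilator_map {R M N : Type*} [CommSemiring R] [AddCommMonoid M]
    [Module R M] [AddCommMonoid N] [Module R N] (f : M →ₗ[R] N) (U : Submodule R M) :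
    (U.map f).dualAnnihilator = U.dualAnnihilator.comap f.dualMap := by
  ext
  simp

theorem LinearMap.mem_ker_sub_one_iff {R M : Type*} [Ring R] [AddCommGroup M] [Module R M]
    (f : M →ₗ[R] M) (v : M) : v ∈ LinearMap.ker (f - 1) ↔ f v = v := by
  rw [LinearMap.mem_ker, LinearMap.sub_apply, Module.End.one_apply, sub_eq_zero]

section ZModTwo

variable {V : Type*} [AddCommGroup V] [Module (ZMod 2) V]

theorem span_singleton_injective_zmod_two : Function.Injective fun v : V => (ZMod 2) ∙ v := by
  intro v w h
  obtain ⟨z, rfl⟩ := span_singleton_eq_span_singleton.mp h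
  rw [Subsingleton.elim z 1, one_smul]

theorem map_span_singleton_eq_self_iff_zmod_two (f : V →ₗ[ZMod 2] V) (v : V) :
    ((ZMod 2) ∙ v).map f = (ZMod 2) ∙ v ↔ f v = v := by
  rw [map_span, Set.image_singleton]
  exact span_singleton_injective_zmod_two.eq_iff

noncomputable def fixedLinesEquiv (f : V →ₗ[ZMod 2] V) :
    {v : LinearMap.ker (f - 1) // v ≠ 0} ≃
      {W : Submodule (ZMod 2) V // finrank (ZMod 2) W = 1 ∧ W.map f = W} := by
  refine .ofBijective (fun v => ⟨(ZMod 2) ∙ (v : V), ?rank, ?fixed⟩) ⟨?inj, ?surj⟩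
  case rank => exact finrank_span_singleton (by simpa using v.2)
  case fixed =>
    exact (map_span_singleton_eq_self_iff_zmod_two f v).mpr
      ((f.mem_ker_sub_one_iff v).mp v.1.2)
  case inj =>
    intro v w h
    exact Subtype.ext (Subtype.ext (span_singleton_injective_zmod_two (congrArg Subtype.val h)))
  case surj =>
    rintro ⟨W, hW, hfW⟩
    have hW0 : W ≠ ⊥ := by
      rintro rfl
      exact zero_ne_one (finrank_bot (ZMod 2) V ▸ hW)
    obtain ⟨v, hvW, hv⟩ := exists_mem_ne_zero_of_ne_bot hW0
    obtain rfl := eq_span_singleton_of_mem_of_finrank_eq_one hW hvW hv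
    have hfv := (map_span_singleton_eq_self_iff_zmod_two f v).mp hfW
    exact ⟨⟨⟨v, (f.mem_ker_sub_one_iff v).mpr hfv⟩, by simpa using hv⟩, rfl⟩

end ZModTwo

section Field

variable {K V : Type*} [Field K] [AddCommGroup V] [Module K V]

theorem map_eq_self_iff_map_dualAnnihilator (f : V ≃ₗ[K] V) (U : Subspace K V) :
    U.map (f : V →ₗ[K] V) = U ↔
      U.dualAnnihilator.map (f.dualMap : Dual K V →ₗ[K] Dual K V) = U.dualAnnihilator := by
  rw [← Subspace.dualAnnihilator_inj, dualAnnihilator_map, ← map_symm_eq_iff,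
    ← comap_equiv_eq_map_symm]
  rfl

noncomputable def fixedHyperplanesEquiv [FiniteDimensional K V] (f : V ≃ₗ[K] V) :
    {U : Subspace K V // finrank K U + 1 = finrank K V ∧ U.map (f : V →ₗ[K] V) = U} ≃
      {L : Subspace K (Dual K V) //
        finrank K L = 1 ∧ L.map (f.dualMap : Dual K V →ₗ[K] Dual K V) = L} :=
  Subspace.orderIsoFiniteDimensional.toEquiv.subtypeEquiv fun U => by
    have := U.finrank_add_finrank_dualAnnihilator_eq
    rw [map_eq_self_iff_map_dualAnnihilator]
    exact and_congr_left' (by change _ ↔ finrank K U.dualAnnihilator = 1; omega)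

theorem LinearMap.finrank_ker_dualMap [FiniteDimensional K V] (g : V →ₗ[K] V) :
    finrank K (LinearMap.ker g.dualMap) = finrank K (LinearMap.ker g) := by
  have hg := g.finrank_range_add_finrank_ker
  have hg' := g.dualMap.finrank_range_add_finrank_ker
  rw [Subspace.dual_finrank_eq, LinearMap.finrank_range_dualMap_eq_finrank_range] at hg'
  omega

theorem LinearMap.finrank_ker_dualMap_sub_one [FiniteDimensional K V] (f : V →ₗ[K] V) :
    finrank K (LinearMap.ker (f.dualMap - 1)) = finrank K (LinearMap.ker (f - 1)) := by
  have : (f - 1).dualMap = f.dualMap - 1 := by ext; simp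
  rw [← this, finrank_ker_dualMap]

theorem card_ne_zero_eq_of_finrank_eq {W : Type*} [AddCommGroup W] [Module K W]
    {S : Submodule K V} {T : Submodule K W} [FiniteDimensional K S] [FiniteDimensional K T]
    (h : finrank K S = finrank K T) : Nat.card {x : S // x ≠ 0} = Nat.card {y : T // y ≠ 0} :=
  Nat.card_congr <| (LinearEquiv.ofFinrankEq S T h).toEquiv.subtypeEquiv fun _ =>
    (LinearEquiv.map_ne_zero_iff _).symm

end Field

theorem card_fixed_lines_eq_card_fixed_hyperplanes_zmod_two {V : Type*} [AddCommGroup V]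
    [Module (ZMod 2) V] [FiniteDimensional (ZMod 2) V] (f : V ≃ₗ[ZMod 2] V) :
    Nat.card {W : Submodule (ZMod 2) V //
        finrank (ZMod 2) W = 1 ∧ W.map (f : V →ₗ[ZMod 2] V) = W} =
      Nat.card {U : Submodule (ZMod 2) V //
        finrank (ZMod 2) U + 1 = finrank (ZMod 2) V ∧ U.map (f : V →ₗ[ZMod 2] V) = U} := by
  let f' : Dual (ZMod 2) V →ₗ[ZMod 2] Dual (ZMod 2) V := f.dualMap
  calc _ = Nat.card {v : LinearMap.ker ((f : V →ₗ[ZMod 2] V) - 1) // v ≠ 0} :=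
        (Nat.card_congr (fixedLinesEquiv _)).symm
    _ = Nat.card {φ : LinearMap.ker (f' - 1) // φ ≠ 0} :=
        card_ne_zero_eq_of_finrank_eq (LinearMap.finrank_ker_dualMap_sub_one _).symm
    _ = Nat.card {L : Submodule (ZMod 2) (Dual (ZMod 2) V) //
          finrank (ZMod 2) L = 1 ∧ L.map f' = L} :=
        Nat.card_congr (fixedLinesEquiv _)
    _ = _ := (Nat.card_congr (fixedHyperplanesEquiv f)).symm

/-- For every `g ∈ GL(3, 𝔽₂)`, the number of `g`-invariant 1-dimensional subspaces of
`𝔽₂³` (points of the Fano plane) equals the number of `g`-invariant 2-dimensional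
subspaces (lines of the Fano plane). -/
theorem card_fixed_points_eq_card_fixed_lines (g : GL (Fin 3) (ZMod 2)) :
    Nat.card {W : Submodule (ZMod 2) (Fin 3 → ZMod 2) //
        Module.finrank (ZMod 2) W = 1 ∧ glAct g W = W} =
      Nat.card {U : Submodule (ZMod 2) (Fin 3 → ZMod 2) //
        Module.finrank (ZMod 2) U = 2 ∧ glAct g U = U} := by
  have hdim : finrank (ZMod 2) (Fin 3 → ZMod 2) = 2 + 1 := finrank_fin_fun _
  have h := card_fixed_lines_eq_card_fixed_hyperplanes_zmod_two
    (Matrix.toLin'OfInv g.inv_mul g.mul_inv)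
  simp only [hdim, add_left_inj] at h
  exact h
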